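/- arXiv:1307.6808 — 2 statements merged into one kernel-verified Lean document; each statement's English description precedes it below -/
import Mathlib

section
/- Let n ≥ 2, c = (c_1,…,c_n) ∈ ℂ^n, and let W_c ⊆ V^{⊗n} be the image of F(c). Consider the space V^{⊗n} ⊗ V with the copies of V labeled 1, …, n, n+1 from left to right. Then for every v ∈ ℂ the endomorphism R_{n,n+1}(c_n−v) ⋯ R_{2,n+1}(c_2−v) R_{1,n+1}(c_1−v) of V^{⊗n} ⊗ V maps the subspace W_c ⊗ V into itself. -/
/-!
We model the finite-dimensional complex vector space `V` as `ℂ^N` (i.e. `Fin N → ℂ`),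
so that `V^{⊗ n}` is `(Fin n → Fin N) → ℂ` and endomorphisms of `V^{⊗ n}` are matrices
indexed by multi-indices `Fin n → Fin N`.
-/

open scoped BigOperators

noncomputable section

/-- Endomorphisms of `V ⊗ V` for `V = ℂ^N`. -/
abbrev End2 (N : ℕ) := Matrix (Fin N × Fin N) (Fin N × Fin N) ℂ

/-- Endomorphisms of `V^{⊗ n}` for `V = ℂ^N`. -/
abbrev EndT (N n : ℕ) := Matrix (Fin n → Fin N) (Fin n → Fin N) ℂ

/-- `X_{a,b}` : the endomorphism `X` of `V ⊗ V` applied to the tensor factors `a` and `b`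
(in that order) of `V^{⊗ n}`, and the identity on all other factors. -/
def op2 (N n : ℕ) (X : End2 N) (a b : Fin n) : EndT N n :=
  fun f g => X (f a, f b) (g a, g b) *
    ∏ i : Fin n, if i ≠ a ∧ i ≠ b then (if f i = g i then (1 : ℂ) else 0) else 1

/-- The flip (permutation) operator `P : x ⊗ y ↦ y ⊗ x` on `V ⊗ V`. -/
def flipMat (N : ℕ) : End2 N := fun p q => if p.1 = q.2 ∧ p.2 = q.1 then 1 else 0

/-- `R` is a solution of the Yang--Baxter equation (with additive spectral parameters)
on `V ⊗ V ⊗ V`:  `R₁₂(u) R₁₃(u+v) R₂₃(v) = R₂₃(v) R₁₃(u+v) R₁₂(u)`. -/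
def YangBaxter (N : ℕ) (R : ℂ → End2 N) : Prop :=
  ∀ u v : ℂ,
    op2 N 3 (R u) 0 1 * op2 N 3 (R (u + v)) 0 2 * op2 N 3 (R v) 1 2 =
    op2 N 3 (R v) 1 2 * op2 N 3 (R (u + v)) 0 2 * op2 N 3 (R u) 0 1

/-- The fused operator `R_{c,c'}(u)`, acting on `V^{⊗ m}`, where the `n` factors of the first
block are embedded via `a` and the `n'` factors of the second block via `b`:
`R_{c,c'}(u) = ∏→_{i=1..n'} [ R_{n,i'}(u+c_n−c'_i) ⋯ R_{2,i'}(u+c_2−c'_i) R_{1,i'}(u+c_1−c'_i) ]`. -/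
def fusedOp (N : ℕ) (R : ℂ → End2 N) {m n n' : ℕ} (a : Fin n → Fin m) (b : Fin n' → Fin m)
    (c : Fin n → ℂ) (c' : Fin n' → ℂ) (u : ℂ) : EndT N m :=
  ((List.finRange n').map fun i =>
    (((List.finRange n).reverse).map fun k =>
      op2 N m (R (u + c k - c' i)) (a k) (b i)).prod).prod

/-- The list of pairs `(i,j)` with `i < j`, in lexicographic order. -/
def lexPairs (n : ℕ) : List (Fin n × Fin n) :=
  (List.finRange n).flatMap fun i =>
    ((List.finRange n).filter fun j => decide (i < j)).map fun j => (i, j)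

/-- The operator `F(c) = ∏→_{1 ≤ i < j ≤ n} R_{i,j}(c_i − c_j)` on `V^{⊗ n}`
(product over the pairs `i < j` in lexicographic order). -/
def Fop (N : ℕ) (R : ℂ → End2 N) {n : ℕ} (c : Fin n → ℂ) : EndT N n :=
  ((lexPairs n).map fun p => op2 N n (R (c p.1 - c p.2)) p.1 p.2).prod

/-- The endomorphism of `V^{⊗ n}` embedded into `V^{⊗ m}`, acting on the factors listed
by `e` and identically on all other factors. -/
def opBlock (N : ℕ) {m n : ℕ} (e : Fin n → Fin m) (X : EndT N n) : EndT N m :=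
  fun f g => X (f ∘ e) (g ∘ e) *
    ∏ i : Fin m, if ∀ k, e k ≠ i then (if f i = g i then (1 : ℂ) else 0) else 1

/-- The operator `P_π` on `V^{⊗ n}` permuting the tensor factors:
`P_π (x_1 ⊗ ⋯ ⊗ x_n) = x_{π(1)} ⊗ ⋯ ⊗ x_{π(n)}`. -/
def permMat (N n : ℕ) (π : Equiv.Perm (Fin n)) : EndT N n :=
  fun f g => if f = g ∘ π then 1 else 0

/-- The tensor product of a vector of `V^{⊗ n}` and a vector of `V^{⊗ n'}`,
as a vector of `V^{⊗ (n+n')}`. -/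
def tensVec (N : ℕ) {n n' : ℕ} (x : (Fin n → Fin N) → ℂ) (y : (Fin n' → Fin N) → ℂ) :
    (Fin (n + n') → Fin N) → ℂ :=
  fun f => x (fun i => f (Fin.castAdd n' i)) * y (fun j => f (Fin.natAdd n j))

end

/-!
Write `A k = R_{k,n+1}(c_k − v)` and `B i j = R_{i,j}(c_i − c_j)` on `V^{⊗(n+1)}`, so that
`F(c) ⊗ Id` is the ordered product `pairProd B [1, …, n] = ∏→_{i<j} B i j`. The Yang–Baxter
equation gives the braid relation `B i j · A i · A j = A j · A i · B i j` for `i < j`, and `A k`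
commutes with `B i j` for `k ∉ {i, j}`. Pushing `A n ⋯ A 1` through the ordered product one row
`B i (i+1) ⋯ B i n` at a time gives `(A n ⋯ A 1) (F(c) ⊗ Id) = (F(c) ⊗ Id) (A 1 ⋯ A n)`, so the
image of `F(c) ⊗ Id` is invariant.
-/

section PairProd

variable {M ι : Type*} [Monoid M]

def pairProd (B : ι → ι → M) : List ι → M
  | [] => 1
  | i :: t => (t.map (B i)).prod * pairProd B t

variable {A : ι → M} {B : ι → ι → M}

theorem commute_pairProd (hAB : ∀ i j k, k ≠ i → k ≠ j → Commute (A k) (B i j))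
    {k : ι} : ∀ {t : List ι}, k ∉ t → Commute (A k) (pairProd B t)
  | [], _ => Commute.one_right _
  | i :: t, hk => by
    rw [List.mem_cons, not_or] at hk
    refine (Commute.list_prod_right _ _ fun _ hb => ?_).mul_right (commute_pairProd hAB hk.2)
    obtain ⟨j, hj, rfl⟩ := List.mem_map.1 hb
    exact hAB i j k hk.1 (ne_of_mem_of_not_mem hj hk.2).symm

theorem prod_reverse_map_mul_mul_prod_map {P : ι → ι → Prop}
    (hbraid : ∀ i j, P i j → B i j * A i * A j = A j * A i * B i j)
    (hAB : ∀ i j k, k ≠ i → k ≠ j → Commute (A k) (B i j)) {i : ι} :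
    ∀ {t : List ι}, (∀ j ∈ t, P i j) → i ∉ t → t.Nodup →
      (t.reverse.map A).prod * A i * (t.map (B i)).prod =
        (t.map (B i)).prod * A i * (t.reverse.map A).prod
  | [], _, _, _ => by simp
  | j :: s, hP, hi, hnd => by
    rw [List.mem_cons, not_or] at hi
    rw [List.nodup_cons] at hnd
    have ih := prod_reverse_map_mul_mul_prod_map hbraid hAB
      (fun k hk => hP k (List.mem_cons_of_mem _ hk)) hi.2 hnd.2
    have hBs : Commute (B i j) (s.reverse.map A).prod :=
      Commute.list_prod_right _ _ fun _ hb => by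
        obtain ⟨k, hk, rfl⟩ := List.mem_map.1 hb
        rw [List.mem_reverse] at hk
        exact (hAB i j k (ne_of_mem_of_not_mem hk hi.2) (ne_of_mem_of_not_mem hk hnd.1)).symm
    have hAj : Commute (A j) (s.map (B i)).prod :=
      Commute.list_prod_right _ _ fun _ hb => by
        obtain ⟨k, hk, rfl⟩ := List.mem_map.1 hb
        exact hAB i k j (Ne.symm hi.1) (ne_of_mem_of_not_mem hk hnd.1).symm
    simp only [List.reverse_cons, List.map_append, List.prod_append, List.map_cons,
      List.map_nil, List.prod_cons, List.prod_nil, mul_one]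
    calc (s.reverse.map A).prod * A j * A i * (B i j * (s.map (B i)).prod)
        = (s.reverse.map A).prod * (A j * A i * B i j) * (s.map (B i)).prod := by
          simp only [mul_assoc]
      _ = B i j * ((s.reverse.map A).prod * A i * (s.map (B i)).prod) * A j := by
          rw [← hbraid i j (hP j List.mem_cons_self)]
          simp only [← mul_assoc, hBs.eq]
          simp only [mul_assoc, hAj.eq]
      _ = B i j * (s.map (B i)).prod * A i * ((s.reverse.map A).prod * A j) := by
          rw [ih]; simp only [mul_assoc]

theorem prod_reverse_map_mul_pairProd {P : ι → ι → Prop}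
    (hbraid : ∀ i j, P i j → B i j * A i * A j = A j * A i * B i j)
    (hAB : ∀ i j k, k ≠ i → k ≠ j → Commute (A k) (B i j)) :
    ∀ {l : List ι}, l.Pairwise P → l.Nodup →
      (l.reverse.map A).prod * pairProd B l = pairProd B l * (l.map A).prod
  | [], _, _ => by simp [pairProd]
  | i :: t, hP, hnd => by
    rw [List.pairwise_cons] at hP
    rw [List.nodup_cons] at hnd
    have ih := prod_reverse_map_mul_pairProd hbraid hAB hP.2 hnd.2
    have hi := prod_reverse_map_mul_mul_prod_map hbraid hAB hP.1 hnd.1 hnd.2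
    have hcomm := commute_pairProd hAB hnd.1 (B := B)
    simp only [pairProd, List.reverse_cons, List.map_append, List.prod_append, List.map_cons,
      List.map_nil, List.prod_cons, List.prod_nil, mul_one]
    calc (t.reverse.map A).prod * A i * ((t.map (B i)).prod * pairProd B t)
        = (t.map (B i)).prod * A i * ((t.reverse.map A).prod * pairProd B t) := by
          rw [← mul_assoc, hi]; simp only [mul_assoc]
      _ = (t.map (B i)).prod * pairProd B t * (A i * (t.map A).prod) := by
          rw [ih, mul_assoc, ← mul_assoc (A i), hcomm.eq]; simp only [mul_assoc]

theorem prod_map_flatMap_filter_lt {ι : Type*} [LinearOrder ι] (B : ι → ι → M) :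
    ∀ {l : List ι}, l.Pairwise (· < ·) →
      ((l.flatMap fun i => (l.filter fun j => decide (i < j)).map fun j => (i, j)).map
        fun p => B p.1 p.2).prod = pairProd B l
  | [], _ => rfl
  | i :: t, hl => by
    rw [List.pairwise_cons] at hl
    have hrow : (i :: t).filter (fun j => decide (i < j)) = t := by
      rw [List.filter_cons_of_neg (by simp), List.filter_eq_self]
      exact fun j hj => decide_eq_true (hl.1 j hj)
    have hrest : ∀ x ∈ t, (i :: t).filter (fun j => decide (x < j)) =
        t.filter fun j => decide (x < j) := fun x hx =>
      List.filter_cons_of_neg (by simpa using (hl.1 x hx).le)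
    rw [List.flatMap_cons, hrow, List.flatMap_congr fun x hx => by rw [hrest x hx],
      List.map_append, List.prod_append, prod_map_flatMap_filter_lt B hl.2, List.map_map]
    rfl

end PairProd

section OpBlock

open Matrix
open scoped Kronecker

variable {N m k k' : ℕ}

theorem opBlock_apply (e : Fin k → Fin m) (X : EndT N k) (f g : Fin m → Fin N) :
    opBlock N e X f g =
      X (f ∘ e) (g ∘ e) * if ∀ i ∉ Set.range e, f i = g i then 1 else 0 := by
  classical
  simp only [opBlock, Set.mem_range, not_exists]
  congr 1
  convert Fintype.prod_boole (p := fun i => (∀ x, e x ≠ i) → f i = g i) using 2 with i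
  split_ifs <;> simp_all

noncomputable def blockEquiv {e : Fin k → Fin m} (he : Function.Injective e) :
    (Fin m → Fin N) ≃ (Fin k → Fin N) × ({i // i ∉ Set.range e} → Fin N) :=
  (Equiv.piEquivPiSubtypeProd (· ∈ Set.range e) _).trans
    ((Equiv.arrowCongr (Equiv.ofInjective e he).symm (Equiv.refl _)).prodCongr (Equiv.refl _))

theorem blockEquiv_apply {e : Fin k → Fin m} (he : Function.Injective e) (f : Fin m → Fin N) :
    blockEquiv he f = (f ∘ e, fun i : {i // i ∉ Set.range e} => f i) := rfl

theorem opBlock_eq_submatrix_kronecker {e : Fin k → Fin m} (he : Function.Injective e)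
    (X : EndT N k) :
    opBlock N e X = (X ⊗ₖ (1 : Matrix _ _ ℂ)).submatrix (blockEquiv he) (blockEquiv he) := by
  ext f g
  rw [opBlock_apply, submatrix_apply, blockEquiv_apply, blockEquiv_apply, kroneckerMap_apply,
    one_apply]
  simp only [funext_iff, Subtype.forall]

noncomputable def opBlockHom {e : Fin k → Fin m} (he : Function.Injective e) :
    EndT N k →* EndT N m where
  toFun := opBlock N e
  map_one' := by
    rw [opBlock_eq_submatrix_kronecker he, one_kronecker_one, submatrix_one_equiv]
  map_mul' X Y := by
    simp only [opBlock_eq_submatrix_kronecker he, submatrix_mul_equiv, ← mul_kronecker_mul,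
      mul_one]

theorem opBlockHom_apply {e : Fin k → Fin m} (he : Function.Injective e) (X : EndT N k) :
    opBlockHom he X = opBlock N e X := rfl

theorem opBlock_opBlock {e : Fin k → Fin m} (he : Function.Injective e) (e' : Fin k' → Fin k)
    (X : EndT N k') : opBlock N e (opBlock N e' X) = opBlock N (e ∘ e') X := by
  ext f g
  simp only [opBlock_apply, mul_assoc, ite_zero_mul_ite_zero, mul_one]
  congr 2
  simp only [Set.mem_range, not_exists, Function.comp_apply, eq_iff_iff]
  constructor
  · rintro ⟨hrest, hout⟩ i hi
    by_cases hie : ∃ j, e j = i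
    · obtain ⟨j, rfl⟩ := hie
      exact hrest j fun x hx => hi x (congrArg e hx)
    · exact hout i (not_exists.1 hie)
  · intro h
    exact ⟨fun j hj => h (e j) fun x hx => hj x (he hx), fun i hi => h i fun x => hi (e' x)⟩

def pairMat (X : End2 N) : EndT N 2 :=
  X.submatrix (fun f => (f 0, f 1)) (fun f => (f 0, f 1))

theorem op2_eq_opBlock (X : End2 N) (a b : Fin m) :
    op2 N m X a b = opBlock N ![a, b] (pairMat X) := by
  ext f g
  simp only [op2, opBlock, pairMat, submatrix_apply, Function.comp_apply, Fin.forall_fin_two,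
    Matrix.cons_val_zero, Matrix.cons_val_one, ne_comm]

theorem opBlock_op2 {e : Fin k → Fin m} (he : Function.Injective e) (X : End2 N) (a b : Fin k) :
    opBlock N e (op2 N k X a b) = op2 N m X (e a) (e b) := by
  rw [op2_eq_opBlock, op2_eq_opBlock, opBlock_opBlock he]
  congr 1
  ext t
  fin_cases t <;> rfl

theorem opBlock_mul_opBlock_apply {e : Fin k → Fin m} {e' : Fin k' → Fin m}
    (hd : ∀ j j', e j ≠ e' j') (X : EndT N k) (Y : EndT N k') (f g : Fin m → Fin N) :
    (opBlock N e X * opBlock N e' Y) f g = X (f ∘ e) (g ∘ e) * Y (f ∘ e') (g ∘ e') *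
      if ∀ i ∉ Set.range e, i ∉ Set.range e' → f i = g i then 1 else 0 := by
  classical
  have hd' : ∀ i ∈ Set.range e, i ∉ Set.range e' := by
    rintro _ ⟨j, rfl⟩ ⟨j', hj'⟩
    exact hd j j' hj'.symm
  -- the only multi-index contributing to the sum: `g` on the range of `e`, `f` elsewhere
  set h₀ : Fin m → Fin N := fun i => if i ∈ Set.range e then g i else f i
  have h₀e : h₀ ∘ e = g ∘ e := funext fun j => if_pos ⟨j, rfl⟩
  have h₀e' : h₀ ∘ e' = f ∘ e' := funext fun j => if_neg fun hj => hd' _ hj ⟨j, rfl⟩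
  have hcond : (∀ i ∉ Set.range e', h₀ i = g i) ↔
      ∀ i ∉ Set.range e, i ∉ Set.range e' → f i = g i := by
    refine ⟨fun H i hi hi' => (if_neg hi).symm.trans (H i hi'), fun H i hi' => ?_⟩
    by_cases hi : i ∈ Set.range e
    · exact if_pos hi
    · exact (if_neg hi).trans (H i hi hi')
  rw [mul_apply, Finset.sum_eq_single h₀ (fun h _ hne => ?_) (by simp)]
  · have hout : ∀ i ∉ Set.range e, f i = h₀ i := fun i hi => (if_neg hi).symm
    rw [opBlock_apply, opBlock_apply, h₀e, h₀e', if_pos hout, if_congr hcond rfl rfl]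
    ring
  · rw [opBlock_apply, opBlock_apply]
    split_ifs with hout hout'
    · refine absurd (funext fun i => ?_) hne
      by_cases hi : i ∈ Set.range e
      · exact (hout' i (hd' i hi)).trans (if_pos hi).symm
      · exact (hout i hi).symm.trans (if_neg hi).symm
    all_goals simp

theorem commute_opBlock {e : Fin k → Fin m} {e' : Fin k' → Fin m} (hd : ∀ j j', e j ≠ e' j')
    (X : EndT N k) (Y : EndT N k') : Commute (opBlock N e X) (opBlock N e' Y) := by
  ext f g
  rw [opBlock_mul_opBlock_apply hd, opBlock_mul_opBlock_apply fun j' j => (hd j j').symm,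
    mul_comm (X _ _)]
  congr 2
  exact propext (forall_congr' fun i => ⟨fun h hi' hi => h hi hi', fun h hi hi' => h hi' hi⟩)

end OpBlock

theorem commute_op2 {N m : ℕ} (X Y : End2 N) {a b c d : Fin m} (hac : a ≠ c) (had : a ≠ d)
    (hbc : b ≠ c) (hbd : b ≠ d) : Commute (op2 N m X a b) (op2 N m Y c d) := by
  rw [op2_eq_opBlock, op2_eq_opBlock]
  exact commute_opBlock (by simp [Fin.forall_fin_two, *]) _ _

theorem YangBaxter.op2_braid {N : ℕ} {R : ℂ → End2 N} (hR : YangBaxter N R) {m : ℕ}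
    {a b c : Fin m} (hab : a ≠ b) (hac : a ≠ c) (hbc : b ≠ c) (u v : ℂ) :
    op2 N m (R u) a b * op2 N m (R (u + v)) a c * op2 N m (R v) b c =
      op2 N m (R v) b c * op2 N m (R (u + v)) a c * op2 N m (R u) a b := by
  have he : Function.Injective ![a, b, c] := by
    intro x y
    fin_cases x <;> fin_cases y <;> simp [hab, hac, hbc, hab.symm, hac.symm, hbc.symm]
  have h := congrArg (opBlockHom he) (hR u v)
  simp only [map_mul, opBlockHom_apply, opBlock_op2 he] at h
  exact h

theorem right_invariant_subspace_general
    (N : ℕ) (R : ℂ → End2 N) (hR : YangBaxter N R)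
    (n : ℕ) (c : Fin n → ℂ) (v : ℂ) :
    ∀ x ∈ LinearMap.range
        (Matrix.mulVecLin (opBlock N (Fin.castSucc : Fin n → Fin (n + 1)) (Fop N R c))),
      Matrix.mulVec
        ((((List.finRange n).reverse).map fun k =>
          op2 N (n + 1) (R (c k - v)) k.castSucc (Fin.last n)).prod) x ∈
      LinearMap.range
        (Matrix.mulVecLin (opBlock N (Fin.castSucc : Fin n → Fin (n + 1)) (Fop N R c))) := by
  rintro _ ⟨y, rfl⟩
  set A : Fin n → EndT N (n + 1) := fun i => op2 N (n + 1) (R (c i - v)) i.castSucc (Fin.last n)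
  set B : Fin n → Fin n → EndT N (n + 1) :=
    fun i j => op2 N (n + 1) (R (c i - c j)) i.castSucc j.castSucc
  have hcs := Fin.castSucc_injective n
  have hlast (i : Fin n) : i.castSucc ≠ Fin.last n := (Fin.castSucc_lt_last i).ne
  have hF : opBlock N Fin.castSucc (Fop N R c) = pairProd B (List.finRange n) := by
    rw [← opBlockHom_apply hcs, Fop, map_list_prod, List.map_map, ← prod_map_flatMap_filter_lt B
      (List.pairwise_lt_finRange n)]
    exact congrArg _ (List.map_congr_left fun p _ => opBlock_op2 hcs _ _ _)
  have hbraid (i j : Fin n) (hij : i < j) : B i j * A i * A j = A j * A i * B i j := by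
    simpa only [sub_add_sub_cancel] using
      hR.op2_braid (hcs.ne hij.ne) (hlast i) (hlast j) (c i - c j) (c j - v)
  have hAB (i j k : Fin n) (hki : k ≠ i) (hkj : k ≠ j) : Commute (A k) (B i j) :=
    commute_op2 _ _ (hcs.ne hki) (hcs.ne hkj) (hlast i).symm (hlast j).symm
  refine ⟨Matrix.mulVec ((List.finRange n).map A).prod y, ?_⟩
  simp only [Matrix.mulVecLin_apply, Matrix.mulVec_mulVec, hF,
    prod_reverse_map_mul_pairProd hbraid hAB (List.pairwise_lt_finRange n)
      (List.nodup_finRange n)]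

/-- On `V^{⊗n} ⊗ V` (copies of `V` labelled `1, …, n, n+1`), the operator
`R_{n,n+1}(c_n−v) ⋯ R_{2,n+1}(c_2−v) R_{1,n+1}(c_1−v)` maps the subspace `W_c ⊗ V`
(the image of `F(c) ⊗ Id`) into itself. -/
theorem right_invariant_subspace
    (N : ℕ) (R : ℂ → End2 N) (hR : YangBaxter N R)
    (n : ℕ) (hn : 2 ≤ n) (c : Fin n → ℂ) (v : ℂ) :
    ∀ x ∈ LinearMap.range
        (Matrix.mulVecLin (opBlock N (Fin.castSucc : Fin n → Fin (n + 1)) (Fop N R c))),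
      Matrix.mulVec
        ((((List.finRange n).reverse).map fun k =>
          op2 N (n + 1) (R (c k - v)) k.castSucc (Fin.last n)).prod) x ∈
      LinearMap.range
        (Matrix.mulVecLin (opBlock N (Fin.castSucc : Fin n → Fin (n + 1)) (Fop N R c))) :=
  right_invariant_subspace_general N R hR n c v
end

section
/- Let n ≥ 2 and c = (c_1,…,c_n) ∈ ℂ^n. Define R̂(u) := R(u)P ∈ End(V⊗V). Then F(c) = [ ∏_{i=1,…,n−1}^{→} R̂_{i,i+1}(c_1−c_{i+1}) R̂_{i−1,i}(c_2−c_{i+1}) ⋯ R̂_{2,3}(c_{i−1}−c_{i+1}) R̂_{1,2}(c_i−c_{i+1}) ] · P_{w_n}, where the outer product over i is taken left to right with i increasing from 1 to n−1, and inside the i-th group the j-th factor (j = 1,…,i, left to right) is R̂_{i+1−j, i+2−j}(c_j − c_{i+1}). -/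
/-!
We model the finite-dimensional complex vector space `V` as `ℂ^N` (i.e. `Fin N → ℂ`),
so that `V^{⊗ n}` is `(Fin n → Fin N) → ℂ` and endomorphisms of `V^{⊗ n}` are matrices
indexed by multi-indices `Fin n → Fin N`.
-/

open scoped BigOperators

/-!
Write `R̂_{a,a+1}(u) = R_{a,a+1}(u) P_{a,a+1}` and move every flip to the right. Inside the
`(m+1)`-st bracket this turns `R̂_{m,m+1} ⋯ R̂_{0,1}` into `R_{m,m+1} R_{m-1,m+1} ⋯ R_{0,m+1}`
followed by a rotation of the positions `0, …, m+1`. The flips of the earlier brackets have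
accumulated to the reversal of `0, …, m`, and pushing it through the bracket turns it into the
column `R_{0,m+1} ⋯ R_{m,m+1}` of `F(c)` and the reversal of `0, …, m+1`; after the last bracket
this is `P_{w_n}`. Finally, the lexicographic product `F(c)` equals the product of its columns,
since `R_{i,j}` and `R_{i',j'}` with `i < i'` and `j' < j` act on disjoint tensor legs.
-/

open Equiv

namespace List

variable {M α β : Type*} [Monoid M]

lemma prod_map_mul_of_pairwise_commute (l : List α) (f g : α → M)
    (h : l.Pairwise fun a a' => Commute (g a) (f a')) :
    (l.map fun a => f a * g a).prod = (l.map f).prod * (l.map g).prod := by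
  induction l with
  | nil => simp
  | cons a l ih =>
    rw [pairwise_cons] at h
    have hcomm : Commute (g a) (l.map f).prod :=
      Commute.list_prod_right _ _ fun x hx => by
        obtain ⟨a', ha', rfl⟩ := mem_map.mp hx
        exact h.1 a' ha'
    simp only [map_cons, prod_cons, ih h.2, mul_assoc, ← mul_assoc (g a), hcomm.eq]

lemma prod_map_prod_map_comm_of_pairwise (l₁ : List α) (l₂ : List β) (f : α → β → M)
    (h : l₁.Pairwise fun a a' => l₂.Pairwise fun b b' => Commute (f a' b) (f a b')) :
    (l₁.map fun a => (l₂.map (f a)).prod).prod =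
      (l₂.map fun b => (l₁.map (f · b)).prod).prod := by
  induction l₁ with
  | nil => simp
  | cons a l ih =>
    rw [pairwise_cons] at h
    rw [map_cons, prod_cons, ih h.2, ← prod_map_mul_of_pairwise_commute]
    · simp
    · rw [pairwise_iff_forall_sublist]
      intro b b' hbb'
      refine Commute.list_prod_left _ _ fun x hx => ?_
      obtain ⟨a', ha', rfl⟩ := mem_map.mp hx
      exact pairwise_iff_forall_sublist.mp (h.1 a' ha') hbb'

lemma prod_map_finRange_eq_prod_map_range {k : ℕ} (f : Fin k → M) (g : ℕ → M)
    (hfg : ∀ i : Fin k, f i = g i) :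
    ((finRange k).map f).prod = ((range k).map g).prod := by
  rw [← map_coe_finRange_eq_range, map_map]
  exact congrArg prod (map_congr_left fun i _ => hfg i)

lemma prod_map_filter_eq_prod_map_ite (l : List α) (p : α → Prop) [DecidablePred p]
    (f : α → M) :
    ((l.filter p).map f).prod = (l.map fun a => if p a then f a else 1).prod := by
  induction l with
  | nil => rfl
  | cons a l ih => by_cases ha : p a <;> simp [ha, ih]

end List

section Matrices

variable {N n : ℕ}

lemma op2_apply (X : End2 N) (a b : Fin n) (f g : Fin n → Fin N) :
    op2 N n X a b f g =
      X (f a, f b) (g a, g b) * if ∀ i, i ≠ a → i ≠ b → f i = g i then 1 else 0 := by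
  have factor (i : Fin n) :
      (if i ≠ a ∧ i ≠ b then (if f i = g i then (1 : ℂ) else 0) else 1) =
        if i ≠ a → i ≠ b → f i = g i then 1 else 0 := by
    by_cases ha : i = a <;> by_cases hb : i = b <;> simp [ha, hb]
  simp only [op2, factor, Finset.prod_boole, Finset.mem_univ, true_implies]

lemma mul_permMat_apply (M : EndT N n) (σ : Perm (Fin n)) (f g : Fin n → Fin N) :
    (M * permMat N n σ) f g = M f (g ∘ σ) := by
  simp [Matrix.mul_apply, permMat]

lemma permMat_mul_apply (σ : Perm (Fin n)) (M : EndT N n) (f g : Fin n → Fin N) :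
    (permMat N n σ * M) f g = M (f ∘ σ.symm) g := by
  rw [Matrix.mul_apply, Finset.sum_eq_single (f ∘ σ.symm)]
  · simp [permMat, Function.comp_def]
  · intro h _ hh
    have : f ≠ h ∘ σ := fun hf => hh (by simp [hf, Function.comp_def])
    simp [permMat, this]
  · simp

lemma permMat_mul (σ ρ : Perm (Fin n)) :
    permMat N n σ * permMat N n ρ = permMat N n (σ.trans ρ) := by
  ext f g
  rw [mul_permMat_apply]
  rfl

lemma permMat_one : permMat N n 1 = 1 := by
  ext f g
  simp [permMat, Matrix.one_apply]

lemma mul_flipMat_apply (X : End2 N) (p q : Fin N × Fin N) :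
    (X * flipMat N) p q = X p q.swap := by
  rw [Matrix.mul_apply, Finset.sum_eq_single q.swap] <;> simp +contextual [flipMat, Prod.ext_iff]

lemma op2_mul_flipMat (X : End2 N) (a b : Fin n) :
    op2 N n (X * flipMat N) a b = op2 N n X a b * permMat N n (swap a b) := by
  ext f g
  rw [mul_permMat_apply, op2_apply, op2_apply, mul_flipMat_apply]
  simp only [Prod.swap_prod_mk, Function.comp_apply, swap_apply_left, swap_apply_right]
  congr 2
  exact propext <| forall_congr' fun i =>
    imp_congr_right fun ha => imp_congr_right fun hb => by rw [swap_apply_of_ne_of_ne ha hb]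

lemma permMat_mul_op2 (σ : Perm (Fin n)) (X : End2 N) (a b : Fin n) :
    permMat N n σ * op2 N n X (σ a) (σ b) = op2 N n X a b * permMat N n σ := by
  ext f g
  rw [permMat_mul_apply, mul_permMat_apply, op2_apply, op2_apply]
  simp only [Function.comp_apply, symm_apply_apply]
  congr 2
  refine propext ⟨fun h i ha hb => ?_, fun h i ha hb => ?_⟩
  · simpa using h (σ i) (σ.injective.ne ha) (σ.injective.ne hb)
  · simpa using h (σ.symm i) (by rintro rfl; simp at ha) (by rintro rfl; simp at hb)

lemma op2_mul_op2_apply_of_disjoint (X Y : End2 N) {a b a' b' : Fin n}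
    (ha' : a' ≠ a ∧ a' ≠ b) (hb' : b' ≠ a ∧ b' ≠ b) (f g : Fin n → Fin N) :
    (op2 N n X a b * op2 N n Y a' b') f g =
      X (f a, f b) (g a, g b) * Y (f a', f b') (g a', g b') *
        if ∀ i, i ≠ a → i ≠ b → i ≠ a' → i ≠ b' → f i = g i then 1 else 0 := by
  set h₀ : Fin n → Fin N := fun i => if i = a ∨ i = b then g i else f i with hh₀
  rw [Matrix.mul_apply, Finset.sum_eq_single h₀]
  · have agree_f : ∀ i, i ≠ a → i ≠ b → f i = h₀ i := fun i ha hb => by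
      simp [hh₀, ha, hb]
    have agree_g : (∀ i, i ≠ a' → i ≠ b' → h₀ i = g i) ↔
        ∀ i, i ≠ a → i ≠ b → i ≠ a' → i ≠ b' → f i = g i := by
      grind
    rw [op2_apply, op2_apply, if_pos agree_f, if_congr agree_g rfl rfl]
    simp only [hh₀, ha', hb', true_or, or_true, if_true, or_self, if_false]
    ring
  · intro h _ hne
    rw [op2_apply, op2_apply]
    split_ifs with h1 h2
    · refine absurd (funext fun i => ?_) hne
      grind
    all_goals simp
  · simp

lemma op2_commute_of_disjoint (X Y : End2 N) {a b a' b' : Fin n}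
    (ha' : a' ≠ a ∧ a' ≠ b) (hb' : b' ≠ a ∧ b' ≠ b) :
    Commute (op2 N n X a b) (op2 N n Y a' b') := by
  ext f g
  rw [op2_mul_op2_apply_of_disjoint X Y ha' hb',
    op2_mul_op2_apply_of_disjoint Y X ⟨ha'.1.symm, hb'.1.symm⟩ ⟨ha'.2.symm, hb'.2.symm⟩]
  have hcond : (∀ i, i ≠ a' → i ≠ b' → i ≠ a → i ≠ b → f i = g i) ↔
      ∀ i, i ≠ a → i ≠ b → i ≠ a' → i ≠ b' → f i = g i :=
    forall_congr' fun i => by tauto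
  rw [if_congr hcond rfl rfl]
  ring

end Matrices

section Positions

variable {n : ℕ}

-- The identity when `n ≤ b`.
def revIcc (a b : ℕ) : Perm (Fin n) :=
  Function.Involutive.toPerm
    (fun x =>
      ⟨if a ≤ x ∧ (x : ℕ) ≤ b ∧ b < n then a + b - x else x, by split_ifs <;> omega⟩)
    fun x => Fin.ext (by dsimp only; split_ifs <;> omega)

-- The rotation `a ↦ a + 1 ↦ ⋯ ↦ b ↦ a`.
def rotIcc (a b : ℕ) : Perm (Fin n) := (revIcc a b).trans (revIcc (a + 1) b)

lemma revIcc_val (a b : ℕ) (x : Fin n) :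
    (revIcc a b x : ℕ) = if a ≤ x ∧ (x : ℕ) ≤ b ∧ b < n then a + b - x else x := rfl

lemma revIcc_trans_self (a b : ℕ) : (revIcc a b).trans (revIcc a b) = (1 : Perm (Fin n)) := by
  ext x
  simp only [Equiv.trans_apply, revIcc_val, Perm.coe_one, id_eq]
  split_ifs <;> omega

lemma revIcc_zero_zero : revIcc 0 0 = (1 : Perm (Fin n)) := by
  ext x
  simp only [revIcc_val, Perm.coe_one, id_eq]
  split_ifs <;> omega

lemma revIcc_zero_eq_revPerm : revIcc 0 (n - 1) = (Fin.revPerm : Perm (Fin n)) := by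
  ext x
  simp only [revIcc_val, Fin.revPerm_apply, Fin.val_rev]
  split_ifs <;> omega

lemma rotIcc_self (b : ℕ) : rotIcc b b = (1 : Perm (Fin n)) := by
  ext x
  simp only [rotIcc, Equiv.trans_apply, revIcc_val, Perm.coe_one, id_eq]
  split_ifs <;> omega

lemma revIcc_trans_rotIcc_trans_revIcc {m : ℕ} (hm : m + 1 < n) :
    (revIcc 0 m).trans ((rotIcc 0 (m + 1)).trans (revIcc 0 (m + 1))) = (1 : Perm (Fin n)) := by
  ext x
  simp only [rotIcc, Equiv.trans_apply, revIcc_val, Perm.coe_one, id_eq]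
  split_ifs <;> omega

variable [NeZero n]

lemma val_ofNat_of_lt {a : ℕ} (h : a < n) : (Fin.ofNat n a : ℕ) = a := by
  rw [Fin.val_ofNat, Nat.mod_eq_of_lt h]

lemma mk_eq_ofNat {a : ℕ} (h : a < n) : (⟨a, h⟩ : Fin n) = Fin.ofNat n a :=
  Fin.ext (val_ofNat_of_lt h).symm

lemma revIcc_apply_ofNat {a b x : ℕ} (hx : a ≤ x ∧ x ≤ b) (hb : b < n) :
    revIcc a b (Fin.ofNat n x) = Fin.ofNat n (a + b - x) := by
  ext
  simp only [revIcc_val, val_ofNat_of_lt (show x < n by omega),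
    val_ofNat_of_lt (show a + b - x < n by omega)]
  split_ifs <;> omega

lemma revIcc_apply_ofNat_of_lt {a b x : ℕ} (hx : b < x) (hx' : x < n) :
    revIcc a b (Fin.ofNat n x) = Fin.ofNat n x := by
  ext
  simp only [revIcc_val, val_ofNat_of_lt hx']
  split_ifs <;> omega

lemma rotIcc_apply_ofNat_right {a b : ℕ} (hab : a ≤ b) (hb : b < n) :
    rotIcc a b (Fin.ofNat n b) = Fin.ofNat n a := by
  ext
  simp only [rotIcc, Equiv.trans_apply, revIcc_val, val_ofNat_of_lt hb,
    val_ofNat_of_lt (show a < n by omega)]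
  split_ifs <;> omega

lemma rotIcc_apply_ofNat_of_lt {a b x : ℕ} (hx : x < a) (hab : a ≤ b) (hb : b < n) :
    rotIcc a b (Fin.ofNat n x) = Fin.ofNat n x := by
  ext
  simp only [rotIcc, Equiv.trans_apply, revIcc_val, val_ofNat_of_lt (show x < n by omega)]
  split_ifs <;> omega

lemma rotIcc_succ_trans_swap {a b : ℕ} (hab : a < b) (hb : b < n) :
    (rotIcc (a + 1) b).trans (swap (Fin.ofNat n a) (Fin.ofNat n (a + 1))) = rotIcc a b := by
  ext x
  simp only [rotIcc, Equiv.trans_apply, swap_apply_def, Fin.ext_iff, revIcc_val,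
    val_ofNat_of_lt (show a < n by omega), val_ofNat_of_lt (show a + 1 < n by omega),
    apply_ite Fin.val]
  split_ifs <;> omega

end Positions

section HatFormula

variable {N n : ℕ}

lemma permMat_mul_prod_op2 {ι : Type*} (σ : Perm (Fin n)) (l : List ι) (X : ι → End2 N)
    (a b : ι → Fin n) :
    permMat N n σ * (l.map fun t => op2 N n (X t) (σ (a t)) (σ (b t))).prod =
      (l.map fun t => op2 N n (X t) (a t) (b t)).prod * permMat N n σ := by
  induction l with
  | nil => simp
  | cons t l ih => simp only [List.map_cons, List.prod_cons, ← mul_assoc, permMat_mul_op2,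
      mul_assoc _ (permMat N n σ), ih]

variable [NeZero n]

-- Each flip, pushed to the right, lifts the right leg of the next factor to `m + 1`.
lemma prod_op2_mul_flipMat_adjacent (X : ℕ → End2 N) {m k : ℕ} (hk : k ≤ m + 1)
    (hm : m + 1 < n) :
    ((List.range k).map fun j =>
        op2 N n (X j * flipMat N) (Fin.ofNat n (m - j)) (Fin.ofNat n (m - j + 1))).prod =
      ((List.range k).map fun j =>
        op2 N n (X j) (Fin.ofNat n (m - j)) (Fin.ofNat n (m + 1))).prod *
      permMat N n (rotIcc (m + 1 - k) (m + 1)) := by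
  induction k with
  | zero => simp [rotIcc_self, permMat_one]
  | succ k ih =>
    have hfix : rotIcc (m - k + 1) (m + 1) (Fin.ofNat n (m - k)) = Fin.ofNat n (m - k) :=
      rotIcc_apply_ofNat_of_lt (by omega) (by omega) hm
    have hmove : rotIcc (m - k + 1) (m + 1) (Fin.ofNat n (m + 1)) = Fin.ofNat n (m - k + 1) :=
      rotIcc_apply_ofNat_right (by omega) hm
    have hconj := permMat_mul_op2 (rotIcc (m - k + 1) (m + 1)) (X k) (Fin.ofNat n (m - k))
      (Fin.ofNat n (m + 1))
    rw [hfix, hmove] at hconj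
    rw [List.range_succ, List.map_append, List.map_append, List.prod_append, List.prod_append,
      ih (by omega), show m + 1 - k = m - k + 1 by omega, show m + 1 - (k + 1) = m - k by omega]
    simp only [List.map_cons, List.map_nil, List.prod_cons, List.prod_nil, mul_one]
    rw [op2_mul_flipMat, mul_assoc, ← mul_assoc (permMat _ _ _), hconj, mul_assoc, permMat_mul,
      rotIcc_succ_trans_swap (by omega) hm, mul_assoc]

variable (R : ℂ → End2 N) (c : Fin n → ℂ)

def Fcol (b : ℕ) : EndT N n :=
  ((List.range b).map fun a =>
    op2 N n (R (c (Fin.ofNat n a) - c (Fin.ofNat n b))) (Fin.ofNat n a) (Fin.ofNat n b)).prod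

-- The bracket of the formula with index `i = m + 1` (positions counted from `0`).
def hatBracket (m : ℕ) : EndT N n :=
  ((List.range (m + 1)).map fun j =>
    op2 N n (R (c (Fin.ofNat n j) - c (Fin.ofNat n (m + 1))) * flipMat N)
      (Fin.ofNat n (m - j)) (Fin.ofNat n (m - j + 1))).prod

lemma permMat_revIcc_mul_hatBracket_mul_permMat_revIcc {m : ℕ} (hm : m + 1 < n) :
    permMat N n (revIcc 0 m) * hatBracket R c m * permMat N n (revIcc 0 (m + 1)) =
      Fcol R c (m + 1) := by
  set X : ℕ → End2 N := fun j => R (c (Fin.ofNat n j) - c (Fin.ofNat n (m + 1)))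
  have hstar := prod_op2_mul_flipMat_adjacent X (le_refl (m + 1)) hm
  have hrev : (List.range (m + 1)).map (fun j =>
        op2 N n (X j) (Fin.ofNat n (m - j)) (Fin.ofNat n (m + 1))) =
      (List.range (m + 1)).map (fun j =>
        op2 N n (X j) (revIcc 0 m (Fin.ofNat n j)) (revIcc 0 m (Fin.ofNat n (m + 1)))) := by
    refine List.map_congr_left fun j hj => ?_
    rw [List.mem_range] at hj
    rw [revIcc_apply_ofNat ⟨Nat.zero_le j, by omega⟩ (by omega),
      revIcc_apply_ofNat_of_lt (by omega) hm, zero_add]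
  rw [Nat.sub_self, hrev] at hstar
  rw [hatBracket, hstar, ← mul_assoc, permMat_mul_prod_op2, mul_assoc, mul_assoc, permMat_mul,
    permMat_mul, revIcc_trans_rotIcc_trans_revIcc hm, permMat_one, mul_one]
  rfl

lemma prod_hatBracket_mul_permMat_revIcc {k : ℕ} (hk : k < n) :
    ((List.range k).map (hatBracket R c)).prod * permMat N n (revIcc 0 k) =
      ((List.range k).map fun m => Fcol R c (m + 1)).prod := by
  induction k with
  | zero => simp [revIcc_zero_zero, permMat_one]
  | succ k ih =>
    have hinv : permMat N n (revIcc 0 k) * permMat N n (revIcc 0 k) = 1 := by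
      rw [permMat_mul, revIcc_trans_self, permMat_one]
    simp only [List.range_succ, List.map_append, List.prod_append, List.map_cons, List.map_nil,
      List.prod_cons, List.prod_nil, mul_one]
    rw [← ih (by omega), ← permMat_revIcc_mul_hatBracket_mul_permMat_revIcc R c hk]
    simp only [mul_assoc]
    rw [← mul_assoc (permMat N n (revIcc 0 k)), hinv, one_mul]

end HatFormula

section LexToColumns

variable {N n : ℕ} (R : ℂ → End2 N) (c : Fin n → ℂ)

lemma Fop_eq_prod_prod_ite :
    Fop N R c = ((List.finRange n).map fun i => ((List.finRange n).map fun j =>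
      if i < j then op2 N n (R (c i - c j)) i j else 1).prod).prod := by
  rw [Fop, lexPairs, List.map_flatMap, List.flatMap_def, List.prod_flatten, List.map_map]
  refine congrArg List.prod (List.map_congr_left fun i _ => ?_)
  rw [Function.comp_apply, List.map_map, List.prod_map_filter_eq_prod_map_ite]
  rfl

lemma Fop_eq_prod_cols :
    Fop N R c = ((List.finRange n).map fun j => ((List.finRange n).map fun i =>
      if i < j then op2 N n (R (c i - c j)) i j else 1).prod).prod := by
  rw [Fop_eq_prod_prod_ite, List.prod_map_prod_map_comm_of_pairwise]
  refine (List.pairwise_lt_finRange n).imp fun {i i'} hii' =>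
    (List.pairwise_lt_finRange n).imp fun {j j'} hjj' => ?_
  by_cases hij' : i < j'
  · by_cases hi'j : i' < j
    · simp only [hij', hi'j, if_true]
      exact op2_commute_of_disjoint _ _ ⟨hii'.ne, by omega⟩ ⟨by omega, hjj'.ne'⟩
    · simp only [hi'j, if_false, Commute.one_left]
  · simp only [hij', if_false, Commute.one_right]

variable [NeZero n]

lemma prod_ite_lt_eq_Fcol (j : Fin n) :
    ((List.finRange n).map fun i => if i < j then op2 N n (R (c i - c j)) i j else 1).prod =
      Fcol R c j := by
  have hsplit : List.range n = List.range j ++ (List.range (n - j)).map ((j : ℕ) + ·) := by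
    rw [← List.range_add, Nat.add_sub_cancel' j.isLt.le]
  rw [List.prod_map_finRange_eq_prod_map_range _
      (fun a => if a < j then op2 N n (R (c (Fin.ofNat n a) - c j)) (Fin.ofNat n a) j else 1)
      (fun i => by simp only [Fin.ofNat_val_eq_self, Fin.lt_def]),
    hsplit, List.map_append, List.prod_append, List.map_map, Fcol, Fin.ofNat_val_eq_self]
  rw [List.prod_eq_one (l := List.map _ (List.range (n - j))) (by simp), mul_one]
  exact congrArg List.prod (List.map_congr_left fun a ha => if_pos (List.mem_range.mp ha))

lemma Fop_eq_prod_Fcol :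
    Fop N R c = ((List.range (n - 1)).map fun m => Fcol R c (m + 1)).prod := by
  have hsplit : List.range n = 0 :: (List.range (n - 1)).map Nat.succ := by
    rw [← List.range_succ_eq_map, Nat.sub_add_cancel NeZero.one_le]
  rw [Fop_eq_prod_cols, List.prod_map_finRange_eq_prod_map_range _ (Fcol R c)
    (prod_ite_lt_eq_Fcol R c), hsplit, List.map_cons, List.prod_cons, List.map_map]
  exact one_mul _

end LexToColumns

/-- Alternative formula for `F(c)` in terms of `R̂(u) := R(u)P`:
`F(c) = [ ∏→_{i=1..n−1} R̂_{i,i+1}(c_1−c_{i+1}) ⋯ R̂_{2,3}(c_{i−1}−c_{i+1}) R̂_{1,2}(c_i−c_{i+1}) ] · P_{w_n}`,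
where inside the `i`-th group the `j`-th factor (`j = 1,…,i`) is
`R̂_{i+1−j, i+2−j}(c_j − c_{i+1})` and `w_n` is the longest element of `S_n`. -/
theorem Fop_hat_formula
    (N : ℕ) (R : ℂ → End2 N)
    (n : ℕ) (c : Fin n → ℂ) :
    Fop N R c =
    (((List.finRange (n - 1)).map fun i =>
      ((List.finRange (i.val + 1)).map fun j =>
        op2 N n
          (R (c ⟨j.val, by have := i.isLt; have := j.isLt; omega⟩ -
              c ⟨i.val + 1, by have := i.isLt; omega⟩) * flipMat N)
          ⟨i.val - j.val, by have := i.isLt; omega⟩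
          ⟨i.val - j.val + 1, by have := i.isLt; omega⟩).prod).prod) *
    permMat N n Fin.revPerm := by
  rcases Nat.eq_zero_or_pos n with rfl | hn
  · rw [Subsingleton.elim Fin.revPerm 1, permMat_one]
    simp [Fop, lexPairs]
  have : NeZero n := ⟨hn.ne'⟩
  simp only [mk_eq_ofNat]
  rw [List.prod_map_finRange_eq_prod_map_range _ (hatBracket R c) fun i =>
      List.prod_map_finRange_eq_prod_map_range _ _ fun j => rfl,
    ← revIcc_zero_eq_revPerm, prod_hatBracket_mul_permMat_revIcc R c (Nat.sub_lt hn one_pos),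
    Fop_eq_prod_Fcol]
end
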